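/- (Theorem 1, limit form.) Let Ṽ₀ : ℝ^k → ℝ be bounded, V₀(b) = Ṽ₀(A b), Ṽ_{t+1} = H̃ Ṽ_t and V_{t+1} = H V_t. Suppose there are functions V* : Δ(S) → ℝ and Ṽ* : 𝒳 → ℝ such that V_t(b) → V*(b) for every b ∈ Δ(S) and Ṽ_t(χ) → Ṽ*(χ) for every χ ∈ 𝒳 as t → ∞. Then Ṽ*(A b) ≤ V*(b) for every b ∈ Δ(S); i.e., the value function of the summarized abstraction is a lower bound on the value of the original game. -/

import Mathlib

open Finset Matrix

section POSG

variable {S A1 A2 O : Type*} [Fintype S] [Fintype A1] [Fintype A2] [Fintype O]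

/-- Expected immediate reward `E_{b,π₁,π₂}[R]`. -/
def expReward (R : S → A1 → A2 → ℝ) (b : S → ℝ) (π1 : A1 → ℝ) (π2 : S → A2 → ℝ) : ℝ :=
  ∑ s, ∑ a1, ∑ a2, b s * π1 a1 * π2 s a2 * R s a1 a2

/-- `Pr_{b,π₁,π₂}[a₁,o]`, the probability that player 1 plays `a1` and observes `o`. -/
def prObs (T : O → S → S → A1 → A2 → ℝ) (b : S → ℝ) (π1 : A1 → ℝ) (π2 : S → A2 → ℝ)
    (a1 : A1) (o : O) : ℝ :=
  π1 a1 * ∑ s, ∑ a2, ∑ s', b s * π2 s a2 * T o s' s a1 a2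

/-- Bayesian belief update `τ(b,a₁,π₂,o)`. -/
noncomputable def beliefUpd (T : O → S → S → A1 → A2 → ℝ) (b : S → ℝ) (π2 : S → A2 → ℝ)
    (a1 : A1) (o : O) : S → ℝ := fun s' =>
  (∑ s, ∑ a2, b s * π2 s a2 * T o s' s a1 a2) /
    (∑ s'', ∑ s, ∑ a2, b s * π2 s a2 * T o s'' s a1 a2)

/-- Value of the stage game under stage strategies `π₁, π₂` with continuation values `V`. -/
noncomputable def stageVal (T : O → S → S → A1 → A2 → ℝ) (R : S → A1 → A2 → ℝ) (γ : ℝ)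
    (V : (S → ℝ) → ℝ) (b : S → ℝ) (π1 : A1 → ℝ) (π2 : S → A2 → ℝ) : ℝ :=
  expReward R b π1 π2 + γ * ∑ a1, ∑ o,
    if 0 < prObs T b π1 π2 a1 o then
      prObs T b π1 π2 a1 o * V (beliefUpd T b π2 a1 o)
    else 0

/-- The exact Bellman (stage-game) operator `H` over beliefs. -/
noncomputable def Hop (T : O → S → S → A1 → A2 → ℝ) (R : S → A1 → A2 → ℝ) (γ : ℝ)
    (V : (S → ℝ) → ℝ) (b : S → ℝ) : ℝ :=
  ⨅ π2 : {π2 : S → A2 → ℝ // ∀ s, π2 s ∈ stdSimplex ℝ A2},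
    ⨆ π1 : {π1 : A1 → ℝ // π1 ∈ stdSimplex ℝ A1},
      stageVal T R γ V b π1.1 π2.1

/-- The abstract stage-game operator `H̃` over characteristic vectors. -/
noncomputable def Habs {k : ℕ} (T : O → S → S → A1 → A2 → ℝ) (R : S → A1 → A2 → ℝ) (γ : ℝ)
    (A : Matrix (Fin k) S ℝ) (W : (Fin k → ℝ) → ℝ) (χ : Fin k → ℝ) : ℝ :=
  ⨅ b : {b : S → ℝ // b ∈ stdSimplex ℝ S ∧ A.mulVec b = χ},
    ⨅ π2 : {π2 : S → A2 → ℝ // ∀ s, π2 s ∈ stdSimplex ℝ A2},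
      ⨆ π1 : {π1 : A1 → ℝ // π1 ∈ stdSimplex ℝ A1},
        stageVal T R γ (fun b' => W (A.mulVec b')) b.1 π1.1 π2.1

end POSG

/-!
The abstraction is a relaxation: `H̃` minimises over every belief with the given characteristic
vector, the true belief among them, so `H̃ W (A b) ≤ H (W ∘ A) b`. Since `H` is monotone on
beliefs and `Ṽ₀ (A b) = V₀ b`, induction gives `Ṽ_t (A b) ≤ V_t b` for all `t`, and the
inequality passes to the limit. Boundedness of all iterates on the simplex is carried along
because infima and suprema of real families are only meaningful for bounded families.
-/

section BoundedFamilies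

lemma abs_iSup_le_of_abs_le {ι : Sort*} {f : ι → ℝ} {M : ℝ} (hM : 0 ≤ M)
    (hf : ∀ i, |f i| ≤ M) : |⨆ i, f i| ≤ M := by
  rcases isEmpty_or_nonempty ι with hι | hι
  · rwa [Real.iSup_of_isEmpty, abs_zero]
  · refine abs_le.2 ⟨le_ciSup_of_le ⟨M, ?_⟩ hι.some (abs_le.1 (hf _)).1,
      ciSup_le fun j => (abs_le.1 (hf j)).2⟩
    rintro _ ⟨j, rfl⟩
    exact (abs_le.1 (hf j)).2

lemma abs_iInf_le_of_abs_le {ι : Sort*} {f : ι → ℝ} {M : ℝ} (hM : 0 ≤ M)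
    (hf : ∀ i, |f i| ≤ M) : |⨅ i, f i| ≤ M := by
  rcases isEmpty_or_nonempty ι with hι | hι
  · rwa [Real.iInf_of_isEmpty, abs_zero]
  · refine abs_le.2 ⟨le_ciInf fun j => (abs_le.1 (hf j)).1,
      ciInf_le_of_le ⟨-M, ?_⟩ hι.some (abs_le.1 (hf _)).2⟩
    rintro _ ⟨j, rfl⟩
    exact (abs_le.1 (hf j)).1

lemma bddAbove_range_of_abs_le {ι : Sort*} {f : ι → ℝ} {M : ℝ} (hf : ∀ i, |f i| ≤ M) :
    BddAbove (Set.range f) :=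
  ⟨M, by rintro _ ⟨i, rfl⟩; exact (abs_le.1 (hf i)).2⟩

lemma bddBelow_range_of_abs_le {ι : Sort*} {f : ι → ℝ} {M : ℝ} (hf : ∀ i, |f i| ≤ M) :
    BddBelow (Set.range f) :=
  ⟨-M, by rintro _ ⟨i, rfl⟩; exact (abs_le.1 (hf i)).1⟩

end BoundedFamilies

section Simplex

variable {ι : Type*} [Fintype ι]

lemma abs_sum_mul_le_of_mem_stdSimplex {w x : ι → ℝ} {C : ℝ} (hw : w ∈ stdSimplex ℝ ι)
    (hx : ∀ i, |x i| ≤ C) : |∑ i, w i * x i| ≤ C :=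
  calc |∑ i, w i * x i| ≤ ∑ i, w i * C := by
        refine (abs_sum_le_sum_abs _ _).trans (sum_le_sum fun i _ => ?_)
        rw [abs_mul, abs_of_nonneg (hw.1 i)]
        exact mul_le_mul_of_nonneg_left (hx i) (hw.1 i)
    _ = C := by rw [← sum_mul, hw.2, one_mul]

lemma div_sum_mem_stdSimplex {n : ι → ℝ} (hn : ∀ i, 0 ≤ n i) (hpos : 0 < ∑ i, n i) :
    (fun i => n i / ∑ j, n j) ∈ stdSimplex ℝ ι :=
  ⟨fun i => div_nonneg (hn i) hpos.le, by rw [← sum_div, div_self hpos.ne']⟩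

end Simplex

section StageGame

variable {S A1 A2 O : Type*} [Fintype S] [Fintype A2]
  {T : O → S → S → A1 → A2 → ℝ} {R : S → A1 → A2 → ℝ} {γ : ℝ}
  {b : S → ℝ} {π1 : A1 → ℝ} {π2 : S → A2 → ℝ}

lemma prObs_eq_mul_sum (a1 : A1) (o : O) :
    prObs T b π1 π2 a1 o = π1 a1 * ∑ s', ∑ s, ∑ a2, b s * π2 s a2 * T o s' s a1 a2 := by
  rw [prObs]
  congr 1
  exact (sum_congr rfl fun s _ => sum_comm).trans sum_comm

variable [Fintype A1]

lemma prObs_nonneg (hT : ∀ o s' s a1 a2, 0 ≤ T o s' s a1 a2) (hb : b ∈ stdSimplex ℝ S)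
    (hπ1 : π1 ∈ stdSimplex ℝ A1) (hπ2 : ∀ s, π2 s ∈ stdSimplex ℝ A2) (a1 : A1) (o : O) :
    0 ≤ prObs T b π1 π2 a1 o :=
  mul_nonneg (hπ1.1 a1) <| sum_nonneg fun s _ => sum_nonneg fun a2 _ => sum_nonneg fun s' _ =>
    mul_nonneg (mul_nonneg (hb.1 s) ((hπ2 s).1 a2)) (hT o s' s a1 a2)

lemma beliefUpd_mem_stdSimplex (hT : ∀ o s' s a1 a2, 0 ≤ T o s' s a1 a2)
    (hb : b ∈ stdSimplex ℝ S) (hπ1 : π1 ∈ stdSimplex ℝ A1)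
    (hπ2 : ∀ s, π2 s ∈ stdSimplex ℝ A2) {a1 : A1} {o : O}
    (hpos : 0 < prObs T b π1 π2 a1 o) :
    beliefUpd T b π2 a1 o ∈ stdSimplex ℝ S := by
  have hn : ∀ s', 0 ≤ ∑ s, ∑ a2, b s * π2 s a2 * T o s' s a1 a2 := fun s' =>
    sum_nonneg fun s _ => sum_nonneg fun a2 _ =>
      mul_nonneg (mul_nonneg (hb.1 s) ((hπ2 s).1 a2)) (hT o s' s a1 a2)
  rw [prObs_eq_mul_sum] at hpos
  exact div_sum_mem_stdSimplex hn (pos_of_mul_pos_right hpos (hπ1.1 a1))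

lemma abs_expReward_le {RC : ℝ} (hR : ∀ s a1 a2, |R s a1 a2| ≤ RC) (hb : b ∈ stdSimplex ℝ S)
    (hπ1 : π1 ∈ stdSimplex ℝ A1) (hπ2 : ∀ s, π2 s ∈ stdSimplex ℝ A2) :
    |expReward R b π1 π2| ≤ RC := by
  have h : expReward R b π1 π2 = ∑ s, b s * ∑ a1, π1 a1 * ∑ a2, π2 s a2 * R s a1 a2 := by
    simp only [expReward, mul_sum, mul_assoc]
  rw [h]
  exact abs_sum_mul_le_of_mem_stdSimplex hb fun s => abs_sum_mul_le_of_mem_stdSimplex hπ1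
    fun a1 => abs_sum_mul_le_of_mem_stdSimplex (hπ2 s) fun a2 => hR s a1 a2

variable [Fintype O]

lemma sum_sum_prObs (hTsum : ∀ s a1 a2, ∑ o, ∑ s', T o s' s a1 a2 = 1)
    (hb : b ∈ stdSimplex ℝ S) (hπ1 : π1 ∈ stdSimplex ℝ A1)
    (hπ2 : ∀ s, π2 s ∈ stdSimplex ℝ A2) :
    ∑ a1, ∑ o, prObs T b π1 π2 a1 o = 1 := by
  have h : ∀ a1, ∑ o, ∑ s, ∑ a2, ∑ s', b s * π2 s a2 * T o s' s a1 a2 = 1 := fun a1 =>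
    calc _ = ∑ s, ∑ a2, b s * π2 s a2 * ∑ o, ∑ s', T o s' s a1 a2 := by
          simp_rw [mul_sum]
          rw [sum_comm]
          exact sum_congr rfl fun s _ => sum_comm
      _ = 1 := by simp_rw [hTsum, mul_one, ← mul_sum, (hπ2 _).2, mul_one, hb.2]
  simp only [prObs]
  rw [sum_congr rfl fun a1 _ => by rw [← mul_sum, h a1, mul_one], hπ1.2]

lemma abs_stageVal_le (hT : ∀ o s' s a1 a2, 0 ≤ T o s' s a1 a2)
    (hTsum : ∀ s a1 a2, ∑ o, ∑ s', T o s' s a1 a2 = 1) (hγ0 : 0 ≤ γ) {RC C : ℝ}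
    (hR : ∀ s a1 a2, |R s a1 a2| ≤ RC) {V : (S → ℝ) → ℝ} (hV : ∀ β ∈ stdSimplex ℝ S, |V β| ≤ C)
    (hb : b ∈ stdSimplex ℝ S) (hπ1 : π1 ∈ stdSimplex ℝ A1)
    (hπ2 : ∀ s, π2 s ∈ stdSimplex ℝ A2) :
    |stageVal T R γ V b π1 π2| ≤ RC + γ * C := by
  have hC : 0 ≤ C := (abs_nonneg _).trans (hV b hb)
  have hterm : ∀ a1 o, |if 0 < prObs T b π1 π2 a1 o then
      prObs T b π1 π2 a1 o * V (beliefUpd T b π2 a1 o) else 0| ≤ prObs T b π1 π2 a1 o * C := by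
    intro a1 o
    split_ifs with hpos
    · rw [abs_mul, abs_of_pos hpos]
      exact mul_le_mul_of_nonneg_left (hV _ (beliefUpd_mem_stdSimplex hT hb hπ1 hπ2 hpos)) hpos.le
    · rw [abs_zero]
      exact mul_nonneg (prObs_nonneg hT hb hπ1 hπ2 a1 o) hC
  have hcont : |∑ a1, ∑ o, if 0 < prObs T b π1 π2 a1 o then
      prObs T b π1 π2 a1 o * V (beliefUpd T b π2 a1 o) else 0| ≤ C :=
    calc _ ≤ ∑ a1, ∑ o, prObs T b π1 π2 a1 o * C :=
          (abs_sum_le_sum_abs _ _).trans <| sum_le_sum fun a1 _ =>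
            (abs_sum_le_sum_abs _ _).trans <| sum_le_sum fun o _ => hterm a1 o
      _ = C := by simp_rw [← sum_mul]; rw [sum_sum_prObs hTsum hb hπ1 hπ2, one_mul]
  calc |stageVal T R γ V b π1 π2| ≤ |expReward R b π1 π2| + γ * C := by
        refine (abs_add_le _ _).trans (add_le_add le_rfl ?_)
        rw [abs_mul, abs_of_nonneg hγ0]
        exact mul_le_mul_of_nonneg_left hcont hγ0
    _ ≤ RC + γ * C := add_le_add (abs_expReward_le hR hb hπ1 hπ2) le_rfl

lemma stageVal_mono (hT : ∀ o s' s a1 a2, 0 ≤ T o s' s a1 a2) (hγ0 : 0 ≤ γ)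
    {V₁ V₂ : (S → ℝ) → ℝ} (hV : ∀ β ∈ stdSimplex ℝ S, V₁ β ≤ V₂ β)
    (hb : b ∈ stdSimplex ℝ S) (hπ1 : π1 ∈ stdSimplex ℝ A1)
    (hπ2 : ∀ s, π2 s ∈ stdSimplex ℝ A2) :
    stageVal T R γ V₁ b π1 π2 ≤ stageVal T R γ V₂ b π1 π2 := by
  refine add_le_add le_rfl (mul_le_mul_of_nonneg_left ?_ hγ0)
  refine sum_le_sum fun a1 _ => sum_le_sum fun o _ => ?_
  split_ifs with hpos
  · exact mul_le_mul_of_nonneg_left (hV _ (beliefUpd_mem_stdSimplex hT hb hπ1 hπ2 hpos)) hpos.le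
  · exact le_rfl

end StageGame

section Operators

variable {S A1 A2 O : Type*} [Fintype S] [Fintype A1] [Fintype A2] [Fintype O]
  {T : O → S → S → A1 → A2 → ℝ} {R : S → A1 → A2 → ℝ} {γ : ℝ}

def BddOnSimplex (V : (S → ℝ) → ℝ) : Prop :=
  ∃ C, ∀ b ∈ stdSimplex ℝ S, |V b| ≤ C

lemma exists_abs_stageVal_le (hT : ∀ o s' s a1 a2, 0 ≤ T o s' s a1 a2)
    (hTsum : ∀ s a1 a2, ∑ o, ∑ s', T o s' s a1 a2 = 1) (hγ0 : 0 ≤ γ)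
    {V : (S → ℝ) → ℝ} (hV : BddOnSimplex V) :
    ∃ M, 0 ≤ M ∧ ∀ b ∈ stdSimplex ℝ S, ∀ π1 ∈ stdSimplex ℝ A1, ∀ π2 : S → A2 → ℝ,
      (∀ s, π2 s ∈ stdSimplex ℝ A2) → |stageVal T R γ V b π1 π2| ≤ M := by
  obtain ⟨C, hC⟩ := hV
  obtain ⟨RC, hR⟩ := Finite.exists_le fun p : S × A1 × A2 => |R p.1 p.2.1 p.2.2|
  refine ⟨max RC 0 + γ * max C 0, by positivity, fun b hb π1 hπ1 π2 hπ2 => ?_⟩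
  exact abs_stageVal_le hT hTsum hγ0 (fun s a1 a2 => (hR (s, a1, a2)).trans (le_max_left _ _))
    (fun β hβ => (hC β hβ).trans (le_max_left _ _)) hb hπ1 hπ2

lemma bddOnSimplex_Hop (hT : ∀ o s' s a1 a2, 0 ≤ T o s' s a1 a2)
    (hTsum : ∀ s a1 a2, ∑ o, ∑ s', T o s' s a1 a2 = 1) (hγ0 : 0 ≤ γ)
    {V : (S → ℝ) → ℝ} (hV : BddOnSimplex V) : BddOnSimplex (Hop T R γ V) := by
  obtain ⟨M, hM, hstage⟩ := exists_abs_stageVal_le (R := R) hT hTsum hγ0 hV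
  exact ⟨M, fun b hb => abs_iInf_le_of_abs_le hM fun π2 => abs_iSup_le_of_abs_le hM fun π1 =>
    hstage b hb π1.1 π1.2 π2.1 π2.2⟩

lemma Hop_mono (hT : ∀ o s' s a1 a2, 0 ≤ T o s' s a1 a2)
    (hTsum : ∀ s a1 a2, ∑ o, ∑ s', T o s' s a1 a2 = 1) (hγ0 : 0 ≤ γ)
    {V₁ V₂ : (S → ℝ) → ℝ} (hV₁ : BddOnSimplex V₁) (hV₂ : BddOnSimplex V₂)
    (hV : ∀ β ∈ stdSimplex ℝ S, V₁ β ≤ V₂ β) {b : S → ℝ} (hb : b ∈ stdSimplex ℝ S) :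
    Hop T R γ V₁ b ≤ Hop T R γ V₂ b := by
  obtain ⟨M₁, hM₁, hstage₁⟩ := exists_abs_stageVal_le (R := R) hT hTsum hγ0 hV₁
  obtain ⟨M₂, -, hstage₂⟩ := exists_abs_stageVal_le (R := R) hT hTsum hγ0 hV₂
  refine ciInf_mono (bddBelow_range_of_abs_le fun π2 => abs_iSup_le_of_abs_le hM₁ fun π1 =>
    hstage₁ b hb π1.1 π1.2 π2.1 π2.2) fun π2 => ?_
  exact ciSup_mono (bddAbove_range_of_abs_le fun π1 => hstage₂ b hb π1.1 π1.2 π2.1 π2.2)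
    fun π1 => stageVal_mono hT hγ0 hV hb π1.2 π2.2

variable {k : ℕ} {A : Matrix (Fin k) S ℝ} {W : (Fin k → ℝ) → ℝ}

lemma Habs_eq_iInf_Hop (χ : Fin k → ℝ) :
    Habs T R γ A W χ = ⨅ b : {b : S → ℝ // b ∈ stdSimplex ℝ S ∧ A *ᵥ b = χ},
      Hop T R γ (fun β => W (A *ᵥ β)) b.1 := rfl

lemma bddOnSimplex_Habs (hT : ∀ o s' s a1 a2, 0 ≤ T o s' s a1 a2)
    (hTsum : ∀ s a1 a2, ∑ o, ∑ s', T o s' s a1 a2 = 1) (hγ0 : 0 ≤ γ)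
    (hW : BddOnSimplex fun b => W (A *ᵥ b)) :
    BddOnSimplex fun b => Habs T R γ A W (A *ᵥ b) := by
  obtain ⟨C, hC⟩ := bddOnSimplex_Hop (R := R) hT hTsum hγ0 hW
  refine ⟨C, fun b hb => ?_⟩
  beta_reduce
  rw [Habs_eq_iInf_Hop]
  exact abs_iInf_le_of_abs_le ((abs_nonneg _).trans (hC b hb)) fun b' => hC b'.1 b'.2.1

lemma Habs_le_Hop (hT : ∀ o s' s a1 a2, 0 ≤ T o s' s a1 a2)
    (hTsum : ∀ s a1 a2, ∑ o, ∑ s', T o s' s a1 a2 = 1) (hγ0 : 0 ≤ γ)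
    (hW : BddOnSimplex fun b => W (A *ᵥ b)) {b : S → ℝ} (hb : b ∈ stdSimplex ℝ S) :
    Habs T R γ A W (A *ᵥ b) ≤ Hop T R γ (fun β => W (A *ᵥ β)) b := by
  obtain ⟨C, hC⟩ := bddOnSimplex_Hop (R := R) hT hTsum hγ0 hW
  rw [Habs_eq_iInf_Hop]
  exact ciInf_le (bddBelow_range_of_abs_le fun b' :
    {b' : S → ℝ // b' ∈ stdSimplex ℝ S ∧ A *ᵥ b' = A *ᵥ b} => hC b'.1 b'.2.1) ⟨b, hb, rfl⟩

end Operators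

open Filter Topology in
theorem abstract_value_lower_bounds_limit_general
    {S A1 A2 O : Type*} [Fintype S] [Fintype A1] [Fintype A2] [Fintype O]
    {k : ℕ}
    (T : O → S → S → A1 → A2 → ℝ) (R : S → A1 → A2 → ℝ) (γ : ℝ)
    (hT : ∀ o s' s a1 a2, 0 ≤ T o s' s a1 a2)
    (hTsum : ∀ s a1 a2, ∑ o, ∑ s', T o s' s a1 a2 = 1)
    (hγ0 : 0 ≤ γ)
    (A : Matrix (Fin k) S ℝ)
    (W0 : (Fin k → ℝ) → ℝ) (hW0 : ∃ C, ∀ χ, |W0 χ| ≤ C)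
    (Wt : ℕ → (Fin k → ℝ) → ℝ) (Vt : ℕ → (S → ℝ) → ℝ)
    (hWt0 : Wt 0 = W0) (hVt0 : ∀ b, Vt 0 b = W0 (A.mulVec b))
    (hWtS : ∀ t, Wt (t + 1) = Habs T R γ A (Wt t))
    (hVtS : ∀ t, Vt (t + 1) = Hop T R γ (Vt t))
    (Vstar : (S → ℝ) → ℝ) (Wstar : (Fin k → ℝ) → ℝ)
    (hVconv : ∀ b ∈ stdSimplex ℝ S, Tendsto (fun t => Vt t b) atTop (𝓝 (Vstar b)))
    (hWconv : ∀ χ ∈ A.mulVec '' stdSimplex ℝ S,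
      Tendsto (fun t => Wt t χ) atTop (𝓝 (Wstar χ))) :
    ∀ b ∈ stdSimplex ℝ S, Wstar (A.mulVec b) ≤ Vstar b := by
  have hbdd : ∀ t, BddOnSimplex (Vt t) ∧ BddOnSimplex fun b => Wt t (A *ᵥ b) := by
    intro t
    induction t with
    | zero =>
      obtain ⟨C, hC⟩ := hW0
      exact ⟨⟨C, fun b _ => hVt0 b ▸ hC _⟩, ⟨C, fun b _ => hWt0 ▸ hC _⟩⟩
    | succ t ih =>
      rw [hVtS, hWtS]
      exact ⟨bddOnSimplex_Hop hT hTsum hγ0 ih.1, bddOnSimplex_Habs hT hTsum hγ0 ih.2⟩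
  have hle : ∀ t, ∀ b ∈ stdSimplex ℝ S, Wt t (A *ᵥ b) ≤ Vt t b := by
    intro t
    induction t with
    | zero => intro b _; rw [hVt0, hWt0]
    | succ t ih =>
      intro b hb
      rw [hVtS, hWtS]
      exact (Habs_le_Hop hT hTsum hγ0 (hbdd t).2 hb).trans
        (Hop_mono hT hTsum hγ0 (hbdd t).2 (hbdd t).1 ih hb)
  exact fun b hb => le_of_tendsto_of_tendsto' (hWconv _ ⟨b, hb, rfl⟩) (hVconv b hb)
    fun t => hle t b hb

open Filter Topology in
/-- Theorem 1, limit form: the value function of the summarized abstraction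
is a lower bound on the value of the original game. -/
theorem abstract_value_lower_bounds_limit
    {S A1 A2 O : Type*} [Fintype S] [Fintype A1] [Fintype A2] [Fintype O]
    [Nonempty S] [Nonempty A1] [Nonempty A2] [Nonempty O] {k : ℕ}
    (T : O → S → S → A1 → A2 → ℝ) (R : S → A1 → A2 → ℝ) (γ : ℝ)
    (hT : ∀ o s' s a1 a2, 0 ≤ T o s' s a1 a2)
    (hTsum : ∀ s a1 a2, ∑ o, ∑ s', T o s' s a1 a2 = 1)
    (hγ0 : 0 ≤ γ) (hγ1 : γ < 1)
    (A : Matrix (Fin k) S ℝ)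
    (W0 : (Fin k → ℝ) → ℝ) (hW0 : ∃ C, ∀ χ, |W0 χ| ≤ C)
    (Wt : ℕ → (Fin k → ℝ) → ℝ) (Vt : ℕ → (S → ℝ) → ℝ)
    (hWt0 : Wt 0 = W0) (hVt0 : ∀ b, Vt 0 b = W0 (A.mulVec b))
    (hWtS : ∀ t, Wt (t + 1) = Habs T R γ A (Wt t))
    (hVtS : ∀ t, Vt (t + 1) = Hop T R γ (Vt t))
    (Vstar : (S → ℝ) → ℝ) (Wstar : (Fin k → ℝ) → ℝ)
    (hVconv : ∀ b ∈ stdSimplex ℝ S, Tendsto (fun t => Vt t b) atTop (𝓝 (Vstar b)))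
    (hWconv : ∀ χ ∈ A.mulVec '' stdSimplex ℝ S,
      Tendsto (fun t => Wt t χ) atTop (𝓝 (Wstar χ))) :
    ∀ b ∈ stdSimplex ℝ S, Wstar (A.mulVec b) ≤ Vstar b :=
  abstract_value_lower_bounds_limit_general T R γ hT hTsum hγ0 A W0 hW0 Wt Vt hWt0 hVt0 hWtS hVtS
    Vstar Wstar hVconv hWconv
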